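/- The fixed points of the Fibonacci entry point function z are exactly the numbers of the form 5^f and 12·5^f for f ≥ 0, together with the convention for n = 1 (z(1) = 1 = 5^0). -/

import Mathlib

/-!
Write `z` for `fibEntry` and `F` for `Nat.fib`. Since `gcd (F a) (F b) = F (gcd a b)`, we have
`n ∣ F m ↔ z n ∣ m`, so `z (lcm a b) = lcm (z a) (z b)`. In `R[ω]` with `ω ^ 2 = ω + 1` one has
`ω ^ (m + 1) = F m + F (m + 1) ω`, which gives the local information:
* for a prime `p ≠ 5`, the Frobenius of `√5 = 2ω - 1` modulo `p` gives `F p ≡ 5 ^ ((p - 1) / 2)`,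
  so by Cassini's identity `z p ∣ p ± 1`, and in particular `p ∤ z p`;
* expanding `(F (m - 1) + F m ω) ^ p` lifts `p ^ j ∣ F m` (`j ≥ 1`) to `p ^ (j + 1) ∣ F (p m)`,
  whence `z (p ^ (j + 1)) ∣ p ^ j z p`;
* `F (5 m) = 5 F m (5 F m ^ 4 ± 5 F m ^ 2 + 1)` gives `z (5 ^ c) = 5 ^ c`.

If `z n = n` and `p ^ k ∣ n` with `p ≠ 5`, then `p ^ k ∣ z n` must come from `z q` for another
prime `q ∣ n`, since `p ∤ z p`. For the largest prime factor of `n` this is impossible unless it is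
at most 5; for `p = 2, 3` it bounds the exponents by those of `12`. Finally `z 2 = 3` and
`z 3 = 4` force the `5`-free part of `n` to be `1` or `12`.
-/

/-- The Fibonacci entry point: least positive `m` with `n ∣ Nat.fib m`. -/
noncomputable def fibEntry (n : ℕ) : ℕ := sInf {m | 0 < m ∧ n ∣ Nat.fib m}

namespace QuadraticAlgebra

variable {R : Type*} [CommSemiring R]

theorem omega_pow_succ_eq_fib (n : ℕ) :
    (ω : QuadraticAlgebra R 1 1) ^ (n + 1) = ⟨Nat.fib n, Nat.fib (n + 1)⟩ := by
  induction n with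
  | zero => ext <;> simp
  | succ n ih =>
    rw [pow_succ', ih, omega_mul_mk, Nat.fib_add_two]
    ext <;> simp

theorem im_omega_pow_eq_fib (n : ℕ) : ((ω : QuadraticAlgebra R 1 1) ^ n).im = Nat.fib n := by
  cases n with
  | zero => simp
  | succ n => rw [omega_pow_succ_eq_fib]

end QuadraticAlgebra

open QuadraticAlgebra

theorem exists_pos_dvd_fib {n : ℕ} (hn : n ≠ 0) : ∃ m, 0 < m ∧ n ∣ Nat.fib m := by
  have : NeZero n := ⟨hn⟩
  have : Finite (QuadraticAlgebra (ZMod n) 1 1) := .of_equiv _ (equivProd 1 1).symm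
  let u : (QuadraticAlgebra (ZMod n) 1 1)ˣ := ⟨ω, ω - 1, by ext <;> simp, by ext <;> simp⟩
  obtain ⟨m, hm, hum⟩ := (isOfFinOrder_of_finite u).exists_pow_eq_one
  have hωm : (ω : QuadraticAlgebra (ZMod n) 1 1) ^ m = 1 := by
    simpa [u] using congrArg Units.val hum
  refine ⟨m, hm, ?_⟩
  rw [← ZMod.natCast_eq_zero_iff, ← im_omega_pow_eq_fib (R := ZMod n), hωm, im_one]

theorem fib_prime_eq_five_pow {p : ℕ} [Fact p.Prime] (hp2 : p ≠ 2) :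
    (Nat.fib p : ZMod p) = 5 ^ (p / 2) := by
  have : CharP (QuadraticAlgebra (ZMod p) 1 1) p := charP_of_injective_algebraMap' (ZMod p) p
  set s : QuadraticAlgebra (ZMod p) 1 1 := 2 * ω - 1
  have hs : s ^ 2 = 5 := by ext <;> simp [s, sq] <;> ring
  have h2 : (2 : QuadraticAlgebra (ZMod p) 1 1) ^ p = 2 := by
    simpa [frobenius_def] using map_ofNat (frobenius (QuadraticAlgebra (ZMod p) 1 1) p) 2
  have hp_eq : p = 2 * (p / 2) + 1 := by
    have := (Fact.out : p.Prime).eq_two_or_odd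
    omega
  have hfrob : 2 * ω ^ p - 1 = (5 ^ (p / 2) : ZMod p) • s :=
    calc 2 * ω ^ p - 1 = s ^ p := by rw [sub_pow_char, mul_pow, h2, one_pow]
      _ = s * 5 ^ (p / 2) := by rw [← hs, ← pow_mul, ← pow_succ', ← hp_eq]
      _ = (5 ^ (p / 2) : ZMod p) • s := by rw [Algebra.smul_def, map_pow, map_ofNat, mul_comm]
  have him := congrArg QuadraticAlgebra.im hfrob
  simp only [im_sub, im_mul, im_omega_pow_eq_fib, im_ofNat, re_ofNat, im_one, im_smul, s,
    omega_re, omega_im] at him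
  have h2ne : (2 : ZMod p) ≠ 0 := Ring.two_ne_zero (by rwa [ZMod.ringChar_zmod_n])
  exact mul_left_cancel₀ h2ne (by linear_combination him)

theorem Nat.fib_succ_mul_fib_pred_sub_fib_sq {n : ℕ} (hn : n ≠ 0) :
    (Nat.fib (n + 1) * Nat.fib (n - 1) : ℤ) - Nat.fib n ^ 2 = (-1) ^ n := by
  have := Int.fib_succ_mul_fib_pred_sub_fib_sq n
  rwa [← Nat.cast_succ, ← Nat.cast_pred (Nat.pos_of_ne_zero hn), Int.fib_natCast,
    Int.fib_natCast, Int.fib_natCast, Int.natAbs_natCast] at this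

theorem prime_dvd_fib_pred_mul_fib_succ {p : ℕ} (hp : p.Prime) (hp5 : p ≠ 5) :
    p ∣ Nat.fib (p - 1) * Nat.fib (p + 1) := by
  obtain rfl | hp2 := eq_or_ne p 2
  · decide
  have : Fact p.Prime := ⟨hp⟩
  have hodd := hp.odd_of_ne_two hp2
  have h5 : (5 : ZMod p) ≠ 0 := by
    intro h
    have := (ZMod.natCast_eq_zero_iff 5 p).mp (by exact_mod_cast h)
    exact hp5 ((Nat.prime_dvd_prime_iff_eq hp Nat.prime_five).mp this)
  have hcassini :=
    congrArg (Int.cast : ℤ → ZMod p) (Nat.fib_succ_mul_fib_pred_sub_fib_sq hp.ne_zero)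
  push_cast at hcassini
  rw [fib_prime_eq_five_pow hp2, ← pow_mul,
    show p / 2 * 2 = p - 1 by have := Nat.odd_iff.mp hodd; omega,
    ZMod.pow_card_sub_one_eq_one h5, hodd.neg_one_pow] at hcassini
  rw [← ZMod.natCast_eq_zero_iff]
  push_cast
  linear_combination hcassini

theorem fib_sq_dvd_fib_mul_sub (m k : ℕ) :
    (Nat.fib (m + 1) : ℤ) ^ 2 ∣
      Nat.fib ((m + 1) * k) - Nat.fib m ^ (k - 1) * Nat.fib (m + 1) * k := by
  let x : QuadraticAlgebra ℤ 1 1 := Nat.fib m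
  let y : QuadraticAlgebra ℤ 1 1 := (Nat.fib (m + 1) : ℤ) • ω
  have hxy : ω ^ (m + 1) = x + y := by rw [omega_pow_succ_eq_fib]; ext <;> simp [x, y]
  have hy : algebraMap ℤ (QuadraticAlgebra ℤ 1 1) (Nat.fib (m + 1) ^ 2) ∣ y ^ 2 :=
    ⟨ω ^ 2, by simp only [y, map_pow, Algebra.smul_def]; ring⟩
  have hlin : x ^ (k - 1) * y * (k : QuadraticAlgebra ℤ 1 1) =
      ((Nat.fib m ^ (k - 1) * Nat.fib (m + 1) * k : ℕ) : ℤ) • ω := by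
    simp only [x, y, Algebra.smul_def]
    push_cast
    ring
  have hpow : x ^ k = ((Nat.fib m ^ k : ℕ) : QuadraticAlgebra ℤ 1 1) := by simp [x]
  have h := (algebraMap_dvd_iff.mp (hy.trans (sq_dvd_add_pow_sub_sub y x k))).2
  rw [← hxy, ← pow_mul, hlin, hpow] at h
  simp only [im_sub, im_omega_pow_eq_fib, im_smul, omega_im, im_natCast, smul_eq_mul, mul_one,
    sub_zero] at h
  exact_mod_cast h

theorem pow_add_two_dvd_fib_mul {p j m : ℕ} (h : p ^ (j + 1) ∣ Nat.fib m) :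
    p ^ (j + 2) ∣ Nat.fib (p * m) := by
  rcases m with _ | m
  · simp
  have h' : (p : ℤ) ^ (j + 1) ∣ Nat.fib (m + 1) := by exact_mod_cast h
  have hsq : (p : ℤ) ^ (j + 2) ∣ Nat.fib (m + 1) ^ 2 :=
    (pow_dvd_pow (p : ℤ) (by omega : j + 2 ≤ (j + 1) * 2)).trans
      (by rw [pow_mul]; exact pow_dvd_pow_of_dvd h' 2)
  have hlin : (p : ℤ) ^ (j + 2) ∣ Nat.fib m ^ (p - 1) * Nat.fib (m + 1) * p := by
    rw [pow_succ]
    exact mul_dvd_mul (dvd_mul_of_dvd_right h' _) dvd_rfl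
  rw [← Int.natCast_dvd_natCast, mul_comm]
  simpa using dvd_add (hsq.trans (fib_sq_dvd_fib_mul_sub m p)) hlin

open Real goldenRatio in
theorem fib_five_mul (m : ℕ) :
    (Nat.fib (5 * m) : ℤ) =
      5 * Nat.fib m * (5 * (Nat.fib m ^ 4 + (-1) ^ m * Nat.fib m ^ 2) + 1) := by
  apply Int.cast_injective (α := ℝ)
  push_cast
  have hs : √5 ^ 2 = 5 := Real.sq_sqrt (by norm_num)
  have hs0 : √5 ≠ 0 := by positivity
  have hy : ψ ^ m = φ ^ m - √5 * Nat.fib m := by rw [Real.coe_fib_eq]; field_simp; ring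
  have he : (-1 : ℝ) ^ m = φ ^ m * ψ ^ m := by rw [← mul_pow, Real.goldenRatio_mul_goldenConj]
  have he2 : (φ ^ m * ψ ^ m) ^ 2 = 1 := by
    rw [← he, ← pow_mul, mul_comm, pow_mul, neg_one_sq, one_pow]
  apply mul_left_cancel₀ hs0
  rw [Real.coe_fib_eq, mul_div_cancel₀ _ hs0, pow_mul', pow_mul', he]
  rw [hy] at he2 ⊢
  -- `x ^ 5 - y ^ 5 = d ^ 5 + 5 x y d ^ 3 + 5 (x y) ^ 2 d` for `d = x - y = √5 F m`
  linear_combination (√5 * (Nat.fib m : ℝ) ^ 5 * (√5 ^ 2 + 5)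
    + 5 * (φ ^ m * (φ ^ m - √5 * Nat.fib m)) * √5 * (Nat.fib m : ℝ) ^ 3) * hs
    + 5 * √5 * (Nat.fib m : ℝ) * he2

theorem padicValNat_fib_five_mul {m : ℕ} (hm : m ≠ 0) :
    padicValNat 5 (Nat.fib (5 * m)) = padicValNat 5 (Nat.fib m) + 1 := by
  have : Fact (Nat.Prime 5) := ⟨Nat.prime_five⟩
  have hF : (Nat.fib m : ℤ) ≠ 0 := by simpa using hm
  set u : ℤ := 5 * (Nat.fib m ^ 4 + (-1) ^ m * Nat.fib m ^ 2) + 1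
  have hu5 : ¬ (5 : ℤ) ∣ u := by omega
  have hu0 : u ≠ 0 := by omega
  rw [← padicValInt.of_nat, ← padicValInt.of_nat, fib_five_mul,
    padicValInt.mul (by positivity) hu0, padicValInt.mul (by norm_num) hF,
    padicValInt.eq_zero_of_not_dvd hu5, add_zero, add_comm]
  exact congrArg _ (padicValInt.self (p := 5) (by norm_num))

theorem padicValNat_fib_five_pow (c : ℕ) : padicValNat 5 (Nat.fib (5 ^ c)) = c := by
  induction c with
  | zero => simp
  | succ c ih => rw [pow_succ', padicValNat_fib_five_mul (by positivity), ih]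

theorem dvd_fib_fibEntry (n : ℕ) : n ∣ Nat.fib (fibEntry n) := by
  obtain h | h := Set.eq_empty_or_nonempty {m | 0 < m ∧ n ∣ Nat.fib m}
  · simp [fibEntry, h]
  · exact (Nat.sInf_mem h).2

theorem fibEntry_pos {n : ℕ} (hn : n ≠ 0) : 0 < fibEntry n :=
  (Nat.sInf_mem (exists_pos_dvd_fib hn)).1

theorem dvd_fib_iff_fibEntry_dvd {n m : ℕ} : n ∣ Nat.fib m ↔ fibEntry n ∣ m := by
  refine ⟨fun h => ?_, fun h => (dvd_fib_fibEntry n).trans (Nat.fib_dvd _ _ h)⟩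
  obtain rfl | hm := m.eq_zero_or_pos
  · exact dvd_zero _
  have hz : 0 < fibEntry n :=
    (Nat.sInf_mem (⟨m, hm, h⟩ : {m | 0 < m ∧ n ∣ Nat.fib m}.Nonempty)).1
  have hle : fibEntry n ≤ (fibEntry n).gcd m := Nat.sInf_le
    ⟨Nat.gcd_pos_of_pos_right _ hm, Nat.fib_gcd _ _ ▸ Nat.dvd_gcd (dvd_fib_fibEntry n) h⟩
  exact Nat.gcd_eq_left_iff_dvd.mp (le_antisymm (Nat.le_of_dvd hz (Nat.gcd_dvd_left _ _)) hle)

theorem fibEntry_dvd_fibEntry {a b : ℕ} (h : a ∣ b) : fibEntry a ∣ fibEntry b :=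
  dvd_fib_iff_fibEntry_dvd.mp (h.trans (dvd_fib_fibEntry b))

theorem fibEntry_lcm (a b : ℕ) : fibEntry (a.lcm b) = (fibEntry a).lcm (fibEntry b) := by
  refine Nat.dvd_antisymm ?_ (Nat.lcm_dvd (fibEntry_dvd_fibEntry (Nat.dvd_lcm_left a b))
    (fibEntry_dvd_fibEntry (Nat.dvd_lcm_right a b)))
  rw [← dvd_fib_iff_fibEntry_dvd]
  exact Nat.lcm_dvd (dvd_fib_iff_fibEntry_dvd.mpr (Nat.dvd_lcm_left _ _))
    (dvd_fib_iff_fibEntry_dvd.mpr (Nat.dvd_lcm_right _ _))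

theorem fibEntry_mul {a b : ℕ} (h : a.Coprime b) :
    fibEntry (a * b) = (fibEntry a).lcm (fibEntry b) := by
  rw [← h.lcm_eq_mul, fibEntry_lcm]

theorem fibEntry_eq_of_forall_lt {n k : ℕ} (hk : 0 < k) (hdvd : n ∣ Nat.fib k)
    (hmin : ∀ m < k, 0 < m → ¬ n ∣ Nat.fib m) : fibEntry n = k := by
  have hz : fibEntry n ∣ k := dvd_fib_iff_fibEntry_dvd.mp hdvd
  by_contra hne
  exact hmin _ (lt_of_le_of_ne (Nat.le_of_dvd hk hz) hne) (Nat.pos_of_dvd_of_pos hz hk)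
    (dvd_fib_fibEntry n)

theorem fibEntry_one : fibEntry 1 = 1 := fibEntry_eq_of_forall_lt one_pos (one_dvd _) (by decide)

theorem fibEntry_two : fibEntry 2 = 3 :=
  fibEntry_eq_of_forall_lt (by norm_num) (by decide) (by decide)

theorem fibEntry_three : fibEntry 3 = 4 :=
  fibEntry_eq_of_forall_lt (by norm_num) (by decide) (by decide)

theorem fibEntry_twelve : fibEntry 12 = 12 :=
  fibEntry_eq_of_forall_lt (by norm_num) (by decide) (by decide)

theorem fibEntry_pow_succ_dvd (p j : ℕ) : fibEntry (p ^ (j + 1)) ∣ p ^ j * fibEntry p := by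
  rw [← dvd_fib_iff_fibEntry_dvd]
  induction j with
  | zero => simpa using dvd_fib_fibEntry p
  | succ j ih => rw [pow_succ' p j, mul_assoc]; exact pow_add_two_dvd_fib_mul ih

theorem fibEntry_five_pow (c : ℕ) : fibEntry (5 ^ c) = 5 ^ c := by
  have : Fact (Nat.Prime 5) := ⟨Nat.prime_five⟩
  have hdvd : 5 ^ c ∣ Nat.fib (5 ^ c) := by
    simpa [padicValNat_fib_five_pow] using pow_padicValNat_dvd (p := 5) (n := Nat.fib (5 ^ c))
  obtain ⟨j, hjc, hz⟩ :=
    (Nat.dvd_prime_pow Nat.prime_five).mp (dvd_fib_iff_fibEntry_dvd.mp hdvd)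
  have hcj : c ≤ j := by
    have := hz ▸ dvd_fib_fibEntry (5 ^ c)
    rwa [padicValNat_dvd_iff_le (Nat.fib_pos.mpr (by positivity)).ne',
      padicValNat_fib_five_pow] at this
  rw [hz, le_antisymm hjc hcj]

theorem fibEntry_twelve_mul_five_pow (c : ℕ) : fibEntry (12 * 5 ^ c) = 12 * 5 ^ c := by
  have hcop : Nat.Coprime 12 (5 ^ c) := Nat.Coprime.pow_right c (by norm_num)
  rw [fibEntry_mul hcop, fibEntry_twelve, fibEntry_five_pow, hcop.lcm_eq_mul]

theorem fibEntry_dvd_pred_or_dvd_succ {p : ℕ} (hp : p.Prime) (hp5 : p ≠ 5) :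
    fibEntry p ∣ p - 1 ∨ fibEntry p ∣ p + 1 := by
  simpa only [dvd_fib_iff_fibEntry_dvd] using
    (Nat.Prime.dvd_mul hp).mp (prime_dvd_fib_pred_mul_fib_succ hp hp5)

theorem not_dvd_fibEntry_self {p : ℕ} (hp : p.Prime) (hp5 : p ≠ 5) : ¬ p ∣ fibEntry p := by
  intro h
  have := hp.two_le
  rcases fibEntry_dvd_pred_or_dvd_succ hp hp5 with h' | h'
  · have := Nat.le_of_dvd (by omega) (h.trans h')
    omega
  · exact hp.one_lt.ne' (Nat.dvd_one.mp ((Nat.dvd_add_right dvd_rfl).mp (h.trans h')))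

theorem le_or_eq_three_of_prime_dvd_fibEntry {q r : ℕ} (hq : q.Prime) (hr : r.Prime)
    (h : r ∣ fibEntry q) : r ≤ q ∨ r = 3 := by
  obtain rfl | hq5 := eq_or_ne q 5
  · rw [← pow_one 5, fibEntry_five_pow] at h
    exact Or.inl (Nat.le_of_dvd (by norm_num) h)
  have := hq.two_le
  rcases fibEntry_dvd_pred_or_dvd_succ hq hq5 with h' | h'
  · exact Or.inl ((Nat.le_of_dvd (by omega) (h.trans h')).trans (Nat.sub_le q 1))
  · have := Nat.le_of_dvd (by omega) (h.trans h')
    rcases hq.eq_two_or_odd with rfl | hq2 <;> rcases hr.eq_two_or_odd with rfl | hr2 <;> omega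

theorem Nat.Prime.pow_dvd_lcm_iff {p k a b : ℕ} (hp : p.Prime) (ha : a ≠ 0) (hb : b ≠ 0) :
    p ^ k ∣ a.lcm b ↔ p ^ k ∣ a ∨ p ^ k ∣ b := by
  rw [hp.pow_dvd_iff_le_factorization (Nat.lcm_ne_zero ha hb), hp.pow_dvd_iff_le_factorization ha,
    hp.pow_dvd_iff_le_factorization hb, Nat.factorization_lcm ha hb, Finsupp.sup_apply, le_sup_iff]

theorem exists_prime_pow_of_prime_pow_dvd_fibEntry {n p k : ℕ} (hn : n ≠ 0) (hp : p.Prime)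
    (hk : k ≠ 0) (h : p ^ k ∣ fibEntry n) :
    ∃ q j, q.Prime ∧ j ≠ 0 ∧ q ^ j ∣ n ∧ p ^ k ∣ q ^ (j - 1) * fibEntry q := by
  induction n using Nat.recOnPosPrimePosCoprime with
  | prime_pow q j hq hj =>
    obtain ⟨j, rfl⟩ := Nat.exists_eq_add_one_of_ne_zero hj.ne'
    exact ⟨q, j + 1, hq, j.succ_ne_zero, dvd_rfl, h.trans (fibEntry_pow_succ_dvd q j)⟩
  | zero => exact absurd rfl hn
  | one =>
    rw [fibEntry_one, Nat.dvd_one, Nat.pow_eq_one] at h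
    exact absurd h (not_or.mpr ⟨hp.one_lt.ne', hk⟩)
  | coprime a b _ _ hab iha ihb =>
    have ha := left_ne_zero_of_mul hn
    have hb := right_ne_zero_of_mul hn
    rw [fibEntry_mul hab, hp.pow_dvd_lcm_iff (fibEntry_pos ha).ne' (fibEntry_pos hb).ne'] at h
    rcases h with h | h
    · obtain ⟨q, j, hq, hj, hqa, hpq⟩ := iha ha h
      exact ⟨q, j, hq, hj, hqa.trans (dvd_mul_right a b), hpq⟩
    · obtain ⟨q, j, hq, hj, hqb, hpq⟩ := ihb hb h
      exact ⟨q, j, hq, hj, hqb.trans (dvd_mul_left b a), hpq⟩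

section FixedPoint

variable {n : ℕ}

theorem exists_prime_ne_of_fibEntry_eq_self {p k : ℕ} (hfix : fibEntry n = n) (hn : n ≠ 0)
    (hp : p.Prime) (hp5 : p ≠ 5) (hk : k ≠ 0) (hpk : p ^ k ∣ n) :
    ∃ q, q.Prime ∧ q ∣ n ∧ q ≠ p ∧ p ^ k ∣ fibEntry q := by
  have hkv : k ≤ n.factorization p := (hp.pow_dvd_iff_le_factorization hn).mp hpk
  obtain ⟨q, j, hq, hj, hqn, hdvd⟩ := exists_prime_pow_of_prime_pow_dvd_fibEntry
    (k := n.factorization p) hn hp (by omega) (by rw [hfix]; exact Nat.ordProj_dvd n p)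
  obtain rfl | hpq := eq_or_ne p q
  · have hcop := ((hp.coprime_iff_not_dvd).mpr (not_dvd_fibEntry_self hp hp5)).pow_left
      (n.factorization p)
    have := (Nat.pow_dvd_pow_iff_le_right hp.one_lt).mp (hcop.dvd_of_dvd_mul_right hdvd)
    have := (hp.pow_dvd_iff_le_factorization hn).mp hqn
    omega
  · have hcop := Nat.Coprime.pow (n.factorization p) (j - 1) ((Nat.coprime_primes hp hq).mpr hpq)
    exact ⟨q, hq, (dvd_pow_self q hj).trans hqn, hpq.symm,
      (pow_dvd_pow p hkv).trans (hcop.dvd_of_dvd_mul_left hdvd)⟩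

theorem prime_le_five_of_fibEntry_eq_self {p : ℕ} (hfix : fibEntry n = n) (hn : n ≠ 0)
    (hp : p.Prime) (hpn : p ∣ n) : p ≤ 5 := by
  obtain ⟨P, hP, hmax⟩ :=
    n.primeFactors.exists_max_image id ⟨p, Nat.mem_primeFactors.mpr ⟨hp, hpn, hn⟩⟩
  obtain ⟨hPp, hPn, -⟩ := Nat.mem_primeFactors.mp hP
  refine (hmax p (Nat.mem_primeFactors.mpr ⟨hp, hpn, hn⟩)).trans (not_lt.mp fun h5 => ?_)
  obtain ⟨q, hq, hqn, hqP, hPq⟩ := exists_prime_ne_of_fibEntry_eq_self hfix hn hPp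
    (by simp at h5; omega) one_ne_zero (by simpa using hPn)
  have hqP' : q ≤ P := hmax q (Nat.mem_primeFactors.mpr ⟨hq, hqn, hn⟩)
  rcases le_or_eq_three_of_prime_dvd_fibEntry hq hPp (by simpa using hPq) with h | h <;>
    simp at h5 <;> omega

theorem dvd_twelve_mul_five_pow_of_fibEntry_eq_self (hfix : fibEntry n = n) (hn : n ≠ 0) :
    n ∣ 12 * 5 ^ n.factorization 5 := by
  refine (Nat.dvd_iff_prime_pow_dvd_dvd _ _).mpr fun p k hp hpk => ?_
  obtain rfl | hk := eq_or_ne k 0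
  · exact (pow_zero p).symm ▸ one_dvd _
  obtain rfl | hp5 := eq_or_ne p 5
  · exact (pow_dvd_pow 5 ((Nat.prime_five.pow_dvd_iff_le_factorization hn).mp hpk)).trans
      (dvd_mul_left _ _)
  obtain ⟨q, hq, hqn, -, hdvd⟩ := exists_prime_ne_of_fibEntry_eq_self hfix hn hp hp5 hk hpk
  have hq5 : q ≠ 5 := by
    rintro rfl
    rw [← pow_one 5, fibEntry_five_pow] at hdvd
    exact hp5 ((Nat.prime_dvd_prime_iff_eq hp Nat.prime_five).mp
      ((dvd_pow_self p hk).trans (by simpa using hdvd)))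
  have hq12 : fibEntry q ∣ 12 := by
    have := prime_le_five_of_fibEntry_eq_self hfix hn hq hqn
    rw [← dvd_fib_iff_fibEntry_dvd]
    interval_cases q <;> first | decide | exact absurd rfl hq5 | norm_num at hq
  exact hdvd.trans (hq12.trans (dvd_mul_right _ _))

theorem exists_eq_five_pow_or_eq_twelve_mul_five_pow_of_fibEntry_eq_self
    (hfix : fibEntry n = n) (hn : n ≠ 0) : ∃ f : ℕ, n = 5 ^ f ∨ n = 12 * 5 ^ f := by
  set c := n.factorization 5
  obtain ⟨m, hm⟩ : 5 ^ c ∣ n := Nat.ordProj_dvd n 5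
  have hm12 : m ∣ 12 := by
    have : n ∣ 12 * 5 ^ c := dvd_twelve_mul_five_pow_of_fibEntry_eq_self hfix hn
    rw [hm, mul_comm 12] at this
    exact Nat.dvd_of_mul_dvd_mul_left (by positivity) this
  have hdvd : ∀ {d}, d ∣ m → fibEntry d ∣ n := fun h =>
    hfix ▸ fibEntry_dvd_fibEntry (h.trans (hm ▸ dvd_mul_left m _))
  have h23 : 2 ∣ m → 3 ∣ m := fun h =>
    (Nat.Coprime.pow_right c (by norm_num)).dvd_of_dvd_mul_left (hm ▸ fibEntry_two ▸ hdvd h)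
  have h34 : 3 ∣ m → 4 ∣ m := fun h =>
    (Nat.Coprime.pow_right c (by norm_num)).dvd_of_dvd_mul_left (hm ▸ fibEntry_three ▸ hdvd h)
  have hm_cases : m = 1 ∨ m = 12 := by
    have := Nat.le_of_dvd (by norm_num) hm12
    interval_cases m <;> omega
  exact ⟨c, by rcases hm_cases with rfl | rfl <;> simp [hm, mul_comm]⟩

end FixedPoint

theorem fibEntry_fixed_points (n : ℕ) (hn : 0 < n) :
    fibEntry n = n ↔ ∃ f : ℕ, n = 5 ^ f ∨ n = 12 * 5 ^ f := by
  constructor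
  · intro hfix
    exact exists_eq_five_pow_or_eq_twelve_mul_five_pow_of_fibEntry_eq_self hfix hn.ne'
  · rintro ⟨f, rfl | rfl⟩
    · exact fibEntry_five_pow f
    · exact fibEntry_twelve_mul_five_pow f
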